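/- (Ando–Hemmen inequality) For symmetric positive definite matrices u and v, the spectral (or Frobenius) norm of u^{1/2} - v^{1/2} is bounded by [λ_min(u)^{1/2} + λ_min(v)^{1/2}]^{-1} times the corresponding norm of u - v. -/

import Mathlib

open Matrix
open scoped Classical

/-- The principal symmetric positive semidefinite square root of a matrix
(junk value `0` if the matrix is not positive semidefinite). -/
noncomputable def psqrt {d : ℕ} (A : Matrix (Fin d) (Fin d) ℝ) : Matrix (Fin d) (Fin d) ℝ :=
  if h : A.PosSemidef then
    (h.1.eigenvectorUnitary : Matrix (Fin d) (Fin d) ℝ) *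
      diagonal ((RCLike.ofReal : ℝ → ℝ) ∘ Real.sqrt ∘ h.1.eigenvalues) *
      (star h.1.eigenvectorUnitary : Matrix (Fin d) (Fin d) ℝ)
  else 0

/-- The Frobenius norm of a real square matrix. -/
noncomputable def frob {d : ℕ} (A : Matrix (Fin d) (Fin d) ℝ) : ℝ :=
  Real.sqrt ((Aᵀ * A).trace)

/-!
Diagonalize `u = P D_u² Pᵀ` and `v = Q D_v² Qᵀ`, so that `√u = P D_u Pᵀ` and `√v = Q D_v Qᵀ`.
The identity `u - v = √u (√u - √v) + (√u - √v) √v` turns, for `Y = Pᵀ (√u - √v) Q`, into the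
Sylvester equation `Pᵀ (u - v) Q = D_u Y + Y D_v`, whose `(i, j)` entry is
`(√λᵢ(u) + √λⱼ(v)) Y i j`. Each factor is at least `√λ_min(u) + √λ_min(v)`, and the Frobenius
norm is invariant under the orthogonal changes of basis.
-/

open Unitary
open scoped ComplexOrder

lemma Matrix.PosDef.iInf_eigenvalues_pos {n 𝕜 : Type*} [Fintype n] [DecidableEq n] [Nonempty n]
    [RCLike 𝕜] {A : Matrix n n 𝕜} (hA : A.PosDef) : 0 < ⨅ i, hA.1.eigenvalues i := by
  obtain ⟨i, hi⟩ := exists_eq_ciInf_of_finite (f := hA.1.eigenvalues)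
  exact hi ▸ hA.eigenvalues_pos i

lemma Unitary.mul_star_self_mul {R : Type*} [Monoid R] [StarMul R] (U : unitary R) (Y : R) :
    (U : R) * (star (U : R) * Y) = Y := by
  rw [← mul_assoc, mul_star_self_of_mem U.2, one_mul]

lemma star_mul_mul_add_mul_mul_eq {R : Type*} [Ring R] [StarMul R] (U V : unitary R) (A X B : R) :
    star (U : R) * (A * X + X * B) * V =
      (star (U : R) * A * U) * (star (U : R) * X * V) +
        (star (U : R) * X * V) * (star (V : R) * B * V) := by
  simp only [mul_add, add_mul, mul_assoc, Unitary.mul_star_self_mul]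

section Frobenius

variable {d : ℕ}

lemma frob_eq_sqrt_sum_sq (M : Matrix (Fin d) (Fin d) ℝ) :
    frob M = √(∑ i, ∑ j, M j i ^ 2) := by
  simp only [frob, trace, diag, mul_apply, transpose_apply, sq]

lemma frob_star_mul_mul (U V : unitary (Matrix (Fin d) (Fin d) ℝ))
    (M : Matrix (Fin d) (Fin d) ℝ) :
    frob (star (U : Matrix (Fin d) (Fin d) ℝ) * M * (V : Matrix (Fin d) (Fin d) ℝ)) = frob M := by
  simp only [frob, ← conjTranspose_eq_transpose_of_trivial, ← star_eq_conjTranspose, star_mul,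
    star_star, mul_assoc, Unitary.mul_star_self_mul]
  rw [trace_mul_comm, mul_assoc, mul_assoc, mul_star_self_of_mem V.2, mul_one]

lemma frob_le_inv_mul_frob_diagonal_mul_add_mul_diagonal {a b : Fin d → ℝ} {m : ℝ} (hm : 0 < m)
    (hab : ∀ i j, m ≤ a i + b j) (X : Matrix (Fin d) (Fin d) ℝ) :
    frob X ≤ m⁻¹ * frob (diagonal a * X + X * diagonal b) := by
  rw [le_inv_mul_iff₀ hm, frob_eq_sqrt_sum_sq, frob_eq_sqrt_sum_sq, ← Real.sqrt_sq hm.le,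
    ← Real.sqrt_mul (sq_nonneg m), Finset.mul_sum]
  refine Real.sqrt_le_sqrt (Finset.sum_le_sum fun i _ => ?_)
  rw [Finset.mul_sum]
  refine Finset.sum_le_sum fun j _ => ?_
  have hentry : (diagonal a * X + X * diagonal b) j i = (a j + b i) * X j i := by
    simp only [Matrix.add_apply, diagonal_mul, mul_diagonal]
    ring
  rw [hentry, mul_pow]
  exact mul_le_mul_of_nonneg_right (pow_le_pow_left₀ hm.le (hab j i) 2) (sq_nonneg _)

end Frobenius

section Sqrt

variable {d : ℕ} {A : Matrix (Fin d) (Fin d) ℝ}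

lemma psqrt_eq_conjStarAlgAut (hA : A.PosSemidef) :
    psqrt A =
      conjStarAlgAut ℝ _ hA.1.eigenvectorUnitary (diagonal (fun i => √(hA.1.eigenvalues i))) := by
  rw [psqrt, dif_pos hA, conjStarAlgAut_apply]
  rfl

lemma conjStarAlgAut_star_psqrt (hA : A.PosSemidef) :
    conjStarAlgAut ℝ _ (star hA.1.eigenvectorUnitary) (psqrt A) =
      diagonal (fun i => √(hA.1.eigenvalues i)) := by
  rw [psqrt_eq_conjStarAlgAut hA, ← conjStarAlgAut_mul_apply, star_mul_self, map_one]
  rfl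

lemma psqrt_mul_self (hA : A.PosSemidef) : psqrt A * psqrt A = A := by
  conv_rhs => rw [hA.1.spectral_theorem]
  rw [psqrt_eq_conjStarAlgAut hA, ← map_mul, diagonal_mul_diagonal]
  congr 2
  ext i
  exact Real.mul_self_sqrt (hA.eigenvalues_nonneg i)

end Sqrt

/-- (Ando–Hemmen inequality) For symmetric positive definite matrices `u` and `v`, the
(Frobenius, unitarily invariant) norm of `u^{1/2} - v^{1/2}` is bounded by
`[λ_min(u)^{1/2} + λ_min(v)^{1/2}]⁻¹` times the corresponding norm of `u - v`. -/
theorem ando_hemmen {d : ℕ} (u v : Matrix (Fin d) (Fin d) ℝ)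
    (hu : u.PosDef) (hv : v.PosDef) :
    frob (psqrt u - psqrt v) ≤
      (Real.sqrt (⨅ i, hu.1.eigenvalues i) + Real.sqrt (⨅ i, hv.1.eigenvalues i))⁻¹ *
        frob (u - v) := by
  rcases isEmpty_or_nonempty (Fin d) with hd | hd
  · simp [frob_eq_sqrt_sum_sq]
  set P := hu.1.eigenvectorUnitary
  set Q := hv.1.eigenvectorUnitary
  set Y : Matrix (Fin d) (Fin d) ℝ :=
    star (P : Matrix (Fin d) (Fin d) ℝ) * (psqrt u - psqrt v) * Q
  have hsylvester : star (P : Matrix (Fin d) (Fin d) ℝ) * (u - v) * Q =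
      diagonal (fun i => √(hu.1.eigenvalues i)) * Y +
        Y * diagonal (fun i => √(hv.1.eigenvalues i)) := by
    have hsq : u - v = psqrt u * (psqrt u - psqrt v) + (psqrt u - psqrt v) * psqrt v := by
      rw [mul_sub, sub_mul, psqrt_mul_self hu.posSemidef, psqrt_mul_self hv.posSemidef]
      abel
    rw [hsq, star_mul_mul_add_mul_mul_eq, ← conjStarAlgAut_star_psqrt hu.posSemidef,
      ← conjStarAlgAut_star_psqrt hv.posSemidef]
    rfl
  rw [← frob_star_mul_mul P Q, ← frob_star_mul_mul P Q (u - v), hsylvester]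
  refine frob_le_inv_mul_frob_diagonal_mul_add_mul_diagonal ?_ (fun i j => add_le_add ?_ ?_) _
  · exact add_pos_of_pos_of_nonneg (Real.sqrt_pos.2 hu.iInf_eigenvalues_pos) (Real.sqrt_nonneg _)
  all_goals exact Real.sqrt_le_sqrt (ciInf_le (Finite.bddBelow_range _) _)
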